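/- Let F_q be a finite field with q ≡ 3 (mod 4), and let f : F_q → F_q preserve positivity on M_2(F_q). Then f(0) = 0, f restricts to a bijection of F_q^+ onto F_q^+, and f restricts to a bijection of F_q^- onto F_q^-; in particular f is a bijection of F_q. -/

import Mathlib

/-- An element of a field is *positive* if it is a nonzero square. -/
def IsPos {F : Type*} [Field F] (x : F) : Prop := ∃ y : F, y ≠ 0 ∧ y ^ 2 = x

/-- The `r`-th leading principal minor of a square matrix (the determinant of the
top-left `(r+1) × (r+1)` submatrix). -/
def leadingMinor {F : Type*} [CommRing F] {n : ℕ} (A : Matrix (Fin n) (Fin n) F)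
    (r : Fin n) : F :=
  (A.submatrix (Fin.castLE r.isLt) (Fin.castLE r.isLt)).det

/-- A matrix over a finite field is positive definite if it is symmetric and all its
leading principal minors are positive (nonzero squares). -/
def IsPosDef {F : Type*} [Field F] {n : ℕ} (A : Matrix (Fin n) (Fin n) F) : Prop :=
  A.IsSymm ∧ ∀ r : Fin n, IsPos (leadingMinor A r)

/-- The entrywise application `f[A]` of `f` to the matrix `A`. -/
def entrywiseMap {F : Type*} {n : ℕ} (f : F → F) (A : Matrix (Fin n) (Fin n) F) :
    Matrix (Fin n) (Fin n) F := Matrix.of fun i j => f (A i j)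

/-- `f` preserves positivity on `n × n` matrices. -/
def PreservesPos {F : Type*} [Field F] (n : ℕ) (f : F → F) : Prop :=
  ∀ A : Matrix (Fin n) (Fin n) F, IsPosDef A → IsPosDef (entrywiseMap f A)

/-!
Since `-1` is a nonsquare, applying the hypothesis to `!![a, b; b, c]` says that `f a` and
`f a * f c - f b * f b` are nonzero squares whenever `a` and `a * c - b * b` are. With `b = 0`
this makes `f` map squares to squares, and `!![x, y; y, x]` makes it injective on them, hence
bijective on `F⁺`, which forces `f 0 = 0`. For the nonsquares one counts: the number of squares
`a` for which `a - e` has a prescribed quadratic character follows from the Jacobi sum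
`J(χ, χ) = -χ(-1)`, and comparing these counts rules out that `f` sends a nonsquare to a square
or identifies two nonsquares.
-/

open Finset

section FinTwo

variable {F : Type*} [Field F]

lemma isPosDef_fin_two_iff {a b c : F} :
    IsPosDef !![a, b; b, c] ↔ IsPos a ∧ IsPos (a * c - b * b) := by
  have hsymm : (!![a, b; b, c]).IsSymm := by
    ext i j
    fin_cases i <;> fin_cases j <;> rfl
  simp [IsPosDef, hsymm, Fin.forall_fin_two, leadingMinor, Matrix.det_fin_two]

lemma PreservesPos.isPos_fin_two {f : F → F} (hf : PreservesPos 2 f) {a b c : F}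
    (ha : IsPos a) (hdet : IsPos (a * c - b * b)) :
    IsPos (f a) ∧ IsPos (f a * f c - f b * f b) := by
  have hmap : entrywiseMap f !![a, b; b, c] = !![f a, f b; f b, f c] := by
    ext i j
    fin_cases i <;> fin_cases j <;> rfl
  have h := hf _ (isPosDef_fin_two_iff.2 ⟨ha, hdet⟩)
  rwa [hmap, isPosDef_fin_two_iff] at h

end FinTwo

section QuadraticChar

variable {F : Type*} [Field F] [Fintype F] [DecidableEq F]

lemma isPos_iff_quadraticChar_eq_one {x : F} : IsPos x ↔ quadraticChar F x = 1 := by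
  constructor
  · rintro ⟨y, hy, rfl⟩
    exact quadraticChar_sq_one' hy
  · intro h
    have hx : x ≠ 0 := by rintro rfl; simp at h
    obtain ⟨r, rfl⟩ := (quadraticChar_one_iff_isSquare hx).1 h
    exact ⟨r, by rintro rfl; simp at hx, sq r⟩

lemma quadraticChar_eq_neg_one_iff_not_isPos {x : F} :
    quadraticChar F x = -1 ↔ x ≠ 0 ∧ ¬ IsPos x := by
  rw [isPos_iff_quadraticChar_eq_one]
  refine ⟨fun h => ⟨?_, by rw [h]; decide⟩,
    fun ⟨hx, h⟩ => (quadraticChar_dichotomy hx).resolve_left h⟩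
  rintro rfl
  simp at h

lemma quadraticChar_neg_one_of_card_mod_four (hq : Fintype.card F % 4 = 3) :
    quadraticChar F (-1) = -1 := by
  rw [quadraticChar_neg_one_iff_not_isSquare, FiniteField.isSquare_neg_one_iff, hq]
  decide

lemma ringChar_ne_two_of_quadraticChar_neg_one (hneg : quadraticChar F (-1) = -1) :
    ringChar F ≠ 2 := by
  intro h
  rw [quadraticChar_eq_one_of_char_two h (neg_ne_zero.2 one_ne_zero)] at hneg
  exact absurd hneg (by decide)

lemma quadraticChar_neg_of_neg_one (hneg : quadraticChar F (-1) = -1) (x : F) :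
    quadraticChar F (-x) = -quadraticChar F x := by
  rw [neg_eq_neg_one_mul, map_mul, hneg, neg_one_mul]

lemma sum_quadraticChar_mul_quadraticChar_sub (hF : ringChar F ≠ 2) {e : F} (he : e ≠ 0) :
    ∑ a, quadraticChar F a * quadraticChar F (a - e) = -1 := by
  have hJ : jacobiSum (quadraticChar F) (quadraticChar F) = -quadraticChar F (-1) := by
    simpa [(quadraticChar_isQuadratic F).inv] using
      jacobiSum_nontrivial_inv (quadraticChar_ne_one hF)
  have hsq : ∀ {x : F}, x ≠ 0 → quadraticChar F x * quadraticChar F x = 1 := fun hx => by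
    rw [← sq, quadraticChar_sq_one hx]
  -- substitute `a = e * x`, so that `a - e = e * (-1) * (1 - x)`
  rw [← Equiv.sum_comp (Equiv.mulLeft₀ e he)]
  calc ∑ x, quadraticChar F (e * x) * quadraticChar F (e * x - e)
      = ∑ x, quadraticChar F (-1) * (quadraticChar F x * quadraticChar F (1 - x)) := by
        refine sum_congr rfl fun x _ => ?_
        rw [show e * x - e = e * (-1) * (1 - x) by ring, map_mul, map_mul, map_mul]
        linear_combination (quadraticChar F (-1) * quadraticChar F x *
          quadraticChar F (1 - x)) * hsq he
    _ = -1 := by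
        rw [← mul_sum, ← jacobiSum, hJ, mul_neg, hsq (neg_ne_zero.2 one_ne_zero)]

end QuadraticChar

section PosShift

variable {F : Type*} [Field F] [Fintype F] [DecidableEq F]

def posShift (e : F) (ε : ℤ) : Finset F :=
  univ.filter fun a => quadraticChar F a = 1 ∧ quadraticChar F (a - e) = ε

lemma four_mul_card_posShift (hF : ringChar F ≠ 2) {e : F} (he : e ≠ 0) {ε : ℤ}
    (hε : ε = 1 ∨ ε = -1) :
    4 * (#(posShift e ε) : ℤ) = Fintype.card F - 2 - quadraticChar F e
      - ε * quadraticChar F (-e) - ε := by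
  set χ := quadraticChar F
  -- `(1 + χ a) * (1 + ε * χ (a - e))` is `4` on `posShift e ε` and `0` elsewhere,
  -- except at `0` and `e`
  have hpt : ∀ a, (if a ∈ posShift e ε then 4 else 0 : ℤ)
      = (1 + χ a) * (1 + ε * χ (a - e)) - (if a = 0 then 1 + ε * χ (-e) else 0)
        - (if a = e then 1 + χ e else 0) := by
    intro a
    by_cases ha : a = 0
    · subst ha
      simp [posShift, χ, he.symm]
    by_cases hae : a = e
    · subst hae
      rcases hε with rfl | rfl <;> simp [posShift, χ, ha]
    rcases quadraticChar_dichotomy ha with h1 | h1 <;>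
      rcases quadraticChar_dichotomy (sub_ne_zero.2 hae) with h2 | h2 <;>
      rcases hε with rfl | rfl <;>
      simp only [posShift, mem_filter, mem_univ, true_and, χ, ha, hae, h1, h2, if_false] <;>
      norm_num
  have hshift : ∑ a, χ (a - e) = 0 := by
    rw [Fintype.sum_equiv (Equiv.subRight e) (fun a => χ (a - e)) χ fun _ => rfl,
      quadraticChar_sum_zero hF]
  have hsum := congrArg (fun g : F → ℤ => ∑ a, g a) (funext hpt)
  simp only [sum_ite_mem, univ_inter, sum_const, nsmul_eq_mul] at hsum
  rw [mul_comm, hsum, sum_sub_distrib, sum_sub_distrib, sum_ite_eq', sum_ite_eq']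
  simp only [mem_univ, if_true]
  have hexp : ∀ a, (1 + χ a) * (1 + ε * χ (a - e))
      = 1 + χ a + ε * χ (a - e) + ε * (χ a * χ (a - e)) := fun a => by ring
  simp only [hexp, sum_add_distrib, ← mul_sum, hshift, quadraticChar_sum_zero hF,
    sum_quadraticChar_mul_quadraticChar_sub hF he, sum_const, card_univ, nsmul_eq_mul, χ]
  ring

end PosShift

section MinusOneNonsquare

variable {F : Type*} [Field F] [Fintype F] [DecidableEq F]

lemma quadraticChar_mul_self_of_eq_neg_one {y : F} (hy : quadraticChar F y = -1) :
    quadraticChar F (y * y) = 1 := by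
  rw [map_mul, hy]
  rfl

lemma four_mul_card_posShift_one (hneg : quadraticChar F (-1) = -1) {e : F}
    (he : quadraticChar F e = 1) : 4 * (#(posShift e 1) : ℤ) = Fintype.card F - 3 := by
  have he0 : e ≠ 0 := by rintro rfl; simp at he
  rw [four_mul_card_posShift (ringChar_ne_two_of_quadraticChar_neg_one hneg) he0 (.inl rfl),
    quadraticChar_neg_of_neg_one hneg, he]
  ring

lemma four_mul_card_posShift_neg_one (hneg : quadraticChar F (-1) = -1) {e : F}
    (he : quadraticChar F e = -1) : 4 * (#(posShift e (-1)) : ℤ) = Fintype.card F + 1 := by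
  have he0 : e ≠ 0 := by rintro rfl; simp at he
  rw [four_mul_card_posShift (ringChar_ne_two_of_quadraticChar_neg_one hneg) he0 (.inr rfl),
    quadraticChar_neg_of_neg_one hneg, he]
  ring

lemma injOn_posShift_one (hneg : quadraticChar F (-1) = -1) :
    Set.InjOn (posShift · 1) {e : F | quadraticChar F e = 1} := by
  have hmem : ∀ {e e' : F}, quadraticChar F e' = 1 → quadraticChar F (e' - e) = 1 →
      posShift e 1 ≠ posShift e' 1 := by
    intro e e' he' hsub h
    have hmem : e' ∈ posShift e' 1 := h ▸ mem_filter.2 ⟨mem_univ _, he', hsub⟩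
    simp [posShift] at hmem
  intro e he e' he' h
  by_contra hne
  rcases quadraticChar_dichotomy (sub_ne_zero.2 (Ne.symm hne)) with hsub | hsub
  · exact hmem he' hsub h
  · refine hmem he ?_ h.symm
    rw [← neg_sub, quadraticChar_neg_of_neg_one hneg, hsub, neg_neg]

lemma mul_self_ne_mul_self_of_quadraticChar_eq (hneg : quadraticChar F (-1) = -1) {x y : F}
    (hx : x ≠ 0) (hxy : quadraticChar F x = quadraticChar F y) (hne : x ≠ y) :
    x * x ≠ y * y := by
  rw [Ne, mul_self_eq_mul_self_iff, not_or]
  refine ⟨hne, fun h => ?_⟩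
  rw [h, quadraticChar_neg_of_neg_one hneg] at hxy
  have hy : quadraticChar F y = 0 := by linarith
  rw [h, quadraticChar_eq_zero_iff.1 hy, neg_zero] at hx
  exact hx rfl

end MinusOneNonsquare

namespace PreservesPos

variable {F : Type*} [Field F] [Fintype F] [DecidableEq F] {f : F → F}

lemma quadraticChar_fin_two (hf : PreservesPos 2 f) {a b c : F}
    (ha : quadraticChar F a = 1) (hdet : quadraticChar F (a * c - b * b) = 1) :
    quadraticChar F (f a) = 1 ∧ quadraticChar F (f a * f c - f b * f b) = 1 := by
  simp only [← isPos_iff_quadraticChar_eq_one] at *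
  exact hf.isPos_fin_two ha hdet

lemma quadraticChar_apply_of_pos (hf : PreservesPos 2 f) {a : F}
    (ha : quadraticChar F a = 1) : quadraticChar F (f a) = 1 :=
  (hf.quadraticChar_fin_two (b := 0) (c := a) ha
    (by rw [mul_zero, sub_zero, map_mul, ha, one_mul])).1

lemma injOn_pos (hf : PreservesPos 2 f) (hneg : quadraticChar F (-1) = -1) :
    Set.InjOn f {x : F | quadraticChar F x = 1} := by
  -- the matrix `!![x, y; y, x]` separates `f x` from `f y` as soon as `x * x - y * y` is positive
  have hsep : ∀ {x y : F}, quadraticChar F x = 1 → quadraticChar F (x * x - y * y) = 1 →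
      f x ≠ f y := by
    intro x y hx hdet hxy
    have h := (hf.quadraticChar_fin_two hx hdet).2
    rw [hxy, sub_self, quadraticChar_zero] at h
    exact zero_ne_one h
  intro x (hx : _ = _) y (hy : _ = _) hxy
  by_contra hne
  have hx0 : x ≠ 0 := by rintro rfl; simp at hx
  have hsq := mul_self_ne_mul_self_of_quadraticChar_eq hneg hx0 (hx.trans hy.symm) hne
  rcases quadraticChar_dichotomy (sub_ne_zero.2 hsq) with hdet | hdet
  · exact hsep hx hdet hxy
  · refine hsep hy ?_ hxy.symm
    rw [← neg_sub, quadraticChar_neg_of_neg_one hneg, hdet, neg_neg]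

lemma bijOn_pos (hf : PreservesPos 2 f) (hneg : quadraticChar F (-1) = -1) :
    Set.BijOn f {x : F | quadraticChar F x = 1} {x : F | quadraticChar F x = 1} :=
  (Set.toFinite {x : F | quadraticChar F x = 1}).injOn_iff_bijOn_of_mapsTo
    (fun _ => hf.quadraticChar_apply_of_pos) |>.1 (hf.injOn_pos hneg)

lemma map_zero (hf : PreservesPos 2 f) (hneg : quadraticChar F (-1) = -1) : f 0 = 0 := by
  by_contra h0
  obtain ⟨v, hv, hvv⟩ : ∃ v, quadraticChar F v = 1 ∧ v * v = f 0 * f 0 := by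
    rcases quadraticChar_dichotomy h0 with h | h
    · exact ⟨f 0, h, rfl⟩
    · exact ⟨-f 0, by rw [quadraticChar_neg_of_neg_one hneg, h, neg_neg], neg_mul_neg _ _⟩
  obtain ⟨a, ha, rfl⟩ := (hf.bijOn_pos hneg).surjOn hv
  have h := (hf.quadraticChar_fin_two (b := 0) (c := a) ha
    (by rw [mul_zero, sub_zero, map_mul, ha, one_mul])).2
  rw [hvv, sub_self, quadraticChar_zero] at h
  exact zero_ne_one h

lemma quadraticChar_apply_of_neg (hf : PreservesPos 2 f) (hneg : quadraticChar F (-1) = -1)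
    {x : F} (hx : quadraticChar F x = -1) : quadraticChar F (f x) = -1 := by
  -- Feed `!![a, x; x, x]`, of determinant `x * (a - x)`. If `f x` were a square, `f` would map
  -- `posShift x (-1)`, of size `(q + 1) / 4`, injectively into `posShift (f x) 1`, of size
  -- `(q - 3) / 4`.
  have hdet : ∀ a ∈ posShift x (-1),
      quadraticChar F (f x) * quadraticChar F (f a - f x) = 1 := by
    intro a ha
    obtain ⟨-, ha1, ha2⟩ := mem_filter.1 ha
    have h := (hf.quadraticChar_fin_two (b := x) (c := x) ha1
      (by rw [show a * x - x * x = x * (a - x) by ring, map_mul, hx, ha2]; rfl)).2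
    rwa [show f a * f x - f x * f x = f x * (f a - f x) by ring, map_mul] at h
  have hcard := four_mul_card_posShift_neg_one hneg hx
  obtain ⟨a, ha⟩ : (posShift x (-1)).Nonempty := by rw [← card_pos]; omega
  have hfx : f x ≠ 0 := by
    intro h0
    simpa [h0] using hdet a ha
  refine (quadraticChar_dichotomy hfx).resolve_left fun hpos => ?_
  have hle : #(posShift x (-1)) ≤ #(posShift (f x) 1) := by
    refine card_le_card_of_injOn f (fun b hb => ?_) fun b hb c hc => ?_
    · have h := hdet b hb
      rw [hpos, one_mul] at h
      exact mem_filter.2 ⟨mem_univ _, hf.quadraticChar_apply_of_pos (mem_filter.1 hb).2.1, h⟩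
    · exact hf.injOn_pos hneg (mem_filter.1 hb).2.1 (mem_filter.1 hc).2.1
  have := four_mul_card_posShift_one hneg hpos
  omega

lemma image_posShift_mul_self (hf : PreservesPos 2 f) (hneg : quadraticChar F (-1) = -1)
    {m : F} (hm : quadraticChar F m = -1) :
    (posShift (m * m) 1).image f = posShift (f m * f m / f 1) 1 := by
  have hf1 := hf.quadraticChar_apply_of_pos (map_one (quadraticChar F))
  have hf10 : f 1 ≠ 0 := by intro h; simp [h] at hf1
  have hdiv : ∀ y : F, quadraticChar F (y / f 1) = quadraticChar F y := fun y => by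
    conv_rhs => rw [← div_mul_cancel₀ y hf10, map_mul, hf1, mul_one]
  have hinj : Set.InjOn f (posShift (m * m) 1) :=
    (hf.injOn_pos hneg).mono fun a ha => (mem_filter.1 ha).2.1
  refine eq_of_subset_of_card_le (fun v hv => ?_) ?_
  · obtain ⟨a, ha, rfl⟩ := mem_image.1 hv
    obtain ⟨-, ha1, ha2⟩ := mem_filter.1 ha
    obtain ⟨hfa, hdet⟩ := hf.quadraticChar_fin_two (b := m) (c := 1) ha1 (by rwa [mul_one])
    refine mem_filter.2 ⟨mem_univ _, hfa, ?_⟩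
    rwa [← hdiv, sub_div, mul_div_cancel_right₀ _ hf10] at hdet
  · have hdom := four_mul_card_posShift_one hneg (quadraticChar_mul_self_of_eq_neg_one hm)
    have hfm := quadraticChar_mul_self_of_eq_neg_one (hf.quadraticChar_apply_of_neg hneg hm)
    have hcod := four_mul_card_posShift_one hneg (e := f m * f m / f 1) (by rwa [hdiv])
    rw [card_image_of_injOn hinj]
    omega

lemma injOn_neg (hf : PreservesPos 2 f) (hneg : quadraticChar F (-1) = -1) :
    Set.InjOn f {x : F | quadraticChar F x = -1} := by
  intro n (hn : _ = _) n' (hn' : _ = _) hfn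
  have himage : (posShift (n * n) 1).image f = (posShift (n' * n') 1).image f := by
    rw [hf.image_posShift_mul_self hneg hn, hf.image_posShift_mul_self hneg hn', hfn]
  have hsub : ∀ y : F, (posShift y 1 : Set F) ⊆ {x : F | quadraticChar F x = 1} :=
    fun y a ha => (mem_filter.1 ha).2.1
  rw [← coe_inj, coe_image, coe_image, (hf.injOn_pos hneg).image_eq_image_iff (hsub _) (hsub _),
    coe_inj] at himage
  have hsq := injOn_posShift_one hneg (quadraticChar_mul_self_of_eq_neg_one hn)
    (quadraticChar_mul_self_of_eq_neg_one hn') himage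
  by_contra hne
  have hn0 : n ≠ 0 := by rintro rfl; simp at hn
  exact mul_self_ne_mul_self_of_quadraticChar_eq hneg hn0 (hn.trans hn'.symm) hne hsq

lemma quadraticChar_apply (hf : PreservesPos 2 f) (hneg : quadraticChar F (-1) = -1) (x : F) :
    quadraticChar F (f x) = quadraticChar F x := by
  rcases eq_or_ne x 0 with rfl | hx
  · rw [hf.map_zero hneg]
  rcases quadraticChar_dichotomy hx with h | h
  · rw [h, hf.quadraticChar_apply_of_pos h]
  · rw [h, hf.quadraticChar_apply_of_neg hneg h]

lemma injective (hf : PreservesPos 2 f) (hneg : quadraticChar F (-1) = -1) :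
    Function.Injective f := by
  intro x y hxy
  have hχ : quadraticChar F x = quadraticChar F y := by
    rw [← hf.quadraticChar_apply hneg, hxy, hf.quadraticChar_apply hneg]
  rcases eq_or_ne x 0 with rfl | hx
  · exact (quadraticChar_eq_zero_iff.1 (hχ.symm.trans quadraticChar_zero)).symm
  rcases quadraticChar_dichotomy hx with h | h
  · exact hf.injOn_pos hneg h (hχ.symm.trans h) hxy
  · exact hf.injOn_neg hneg h (hχ.symm.trans h) hxy

end PreservesPos

/-- if `q ≡ 3 (mod 4)` and `f` preserves positivity on `M_2(F_q)`, then
`f 0 = 0`, `f` restricts to a bijection of `F_q⁺` onto `F_q⁺` and of `F_q⁻` onto `F_q⁻`;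
in particular `f` is a bijection of `F_q`. -/
theorem stmt14 {F : Type*} [Field F] [Fintype F] (hq : Fintype.card F % 4 = 3)
    (f : F → F) (hpres : PreservesPos 2 f) :
    f 0 = 0 ∧ Set.BijOn f {x : F | IsPos x} {x : F | IsPos x} ∧
      Set.BijOn f {x : F | x ≠ 0 ∧ ¬ IsPos x} {x : F | x ≠ 0 ∧ ¬ IsPos x} ∧
      Function.Bijective f := by
  classical
  have hneg := quadraticChar_neg_one_of_card_mod_four hq
  have hbij : Function.Bijective f := Finite.injective_iff_bijective.1 (hpres.injective hneg)
  have hclass : ∀ k : ℤ, Set.BijOn f {x | quadraticChar F x = k} {x | quadraticChar F x = k} :=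
    fun k => by
      simpa only [Set.preimage_ofPred_eq, hpres.quadraticChar_apply hneg] using
        hbij.bijOn_preimage (t := {x | quadraticChar F x = k})
  refine ⟨hpres.map_zero hneg, ?_, ?_, hbij⟩
  · simpa only [isPos_iff_quadraticChar_eq_one] using hclass 1
  · simpa only [← quadraticChar_eq_neg_one_iff_not_isPos] using hclass (-1)
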